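/- arXiv:1301.2356 — 4 statements merged into one kernel-verified Lean document; each statement's English description precedes it below -/
import Mathlib

section
/- If a homeomorphism f of a compact metric space X has the two-sided limit shadowing property, then for all points x, y in X the intersection of the stable set of x and the unstable set of y is nonempty, i.e., there exists z in X with d(f^n(z), f^n(x)) → 0 as n → +∞ and d(f^n(z), f^n(y)) → 0 as n → −∞. -/
open Filter Topology

/-- The `n`-th iterate (for `n : ℤ`) of a homeomorphism. -/
def iterZ {X : Type*} [MetricSpace X] (f : X ≃ₜ X) (n : ℤ) (x : X) : X :=
  (f.toEquiv ^ n) x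

/-- `f` has the two-sided limit shadowing property: every sequence `(x_i)_{i∈ℤ}` with
`d(f(x_i), x_{i+1}) → 0` as `|i| → ∞` admits `y` with `d(f^i(y), x_i) → 0` as `|i| → ∞`. -/
def TwoSidedLimitShadowing {X : Type*} [MetricSpace X] (f : X ≃ₜ X) : Prop :=
  ∀ x : ℤ → X,
    Tendsto (fun i => dist (f (x i)) (x (i + 1))) cofinite (𝓝 0) →
    ∃ y : X, Tendsto (fun i => dist (iterZ f i y) (x i)) cofinite (𝓝 0)

/-- The (pseudo-orbit) shadowing property. -/
def ShadowingProp {X : Type*} [MetricSpace X] (f : X ≃ₜ X) : Prop :=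
  ∀ ε > 0, ∃ δ > 0, ∀ x : ℤ → X,
    (∀ i, dist (f (x i)) (x (i + 1)) < δ) →
    ∃ y, ∀ i, dist (iterZ f i y) (x i) < ε

/-- Expansiveness of a homeomorphism. -/
def ExpansiveH {X : Type*} [MetricSpace X] (f : X ≃ₜ X) : Prop :=
  ∃ ε > 0, ∀ x y : X, (∀ i : ℤ, dist (iterZ f i x) (iterZ f i y) < ε) → x = y

/-- The specification property: for every `ε > 0` there is `L` such that every `L`-spaced
specification (finite family of orbit pieces on integer intervals `[a i, b i]` whose
consecutive intervals are at least `L` apart) is `ε`-shadowed. -/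
def SpecificationProp {X : Type*} [MetricSpace X] (f : X ≃ₜ X) : Prop :=
  ∀ ε > 0, ∃ L : ℕ, ∀ (m : ℕ) (a b : Fin m → ℤ) (P : ℤ → X),
    (∀ i, a i ≤ b i) →
    (∀ (i : ℕ) (h : i + 1 < m), b ⟨i, Nat.lt_of_succ_lt h⟩ + L ≤ a ⟨i + 1, h⟩) →
    (∀ (i : Fin m), ∀ t₁ ∈ Set.Icc (a i) (b i), ∀ t₂ ∈ Set.Icc (a i) (b i),
      iterZ f (t₂ - t₁) (P t₁) = P t₂) →
    ∃ y, ∀ (i : Fin m), ∀ n ∈ Set.Icc (a i) (b i), dist (iterZ f n y) (P n) < ε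

/-- The (positive) limit shadowing property. -/
def LimitShadowing {X : Type*} [MetricSpace X] (f : X ≃ₜ X) : Prop :=
  ∀ x : ℕ → X, Tendsto (fun n => dist (f (x n)) (x (n + 1))) atTop (𝓝 0) →
    ∃ y, Tendsto (fun n : ℕ => dist (iterZ f n y) (x n)) atTop (𝓝 0)

/-- The negative limit shadowing property. -/
def NegLimitShadowing {X : Type*} [MetricSpace X] (f : X ≃ₜ X) : Prop :=
  ∀ x : ℤ → X, Tendsto (fun n => dist (f (x n)) (x (n + 1))) atBot (𝓝 0) →
    ∃ y, Tendsto (fun n : ℤ => dist (iterZ f n y) (x n)) atBot (𝓝 0)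

/-- If a homeomorphism of a compact metric space has the two-sided limit shadowing property,
then for all `x, y` the stable set of `x` meets the unstable set of `y`. -/
theorem stmt0 {X : Type*} [MetricSpace X] [CompactSpace X] (f : X ≃ₜ X)
    (h : TwoSidedLimitShadowing f) (x y : X) :
    ∃ z : X,
      Tendsto (fun n : ℕ => dist (iterZ f n z) (iterZ f n x)) atTop (𝓝 0) ∧
      Tendsto (fun n : ℕ => dist (iterZ f (-(n : ℤ)) z) (iterZ f (-(n : ℤ)) y)) atTop (𝓝 0) := by

  classical
  set P : ℤ → X := fun i => if i < 0 then iterZ f i y else iterZ f i x with hP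
  have hstep : ∀ (i : ℤ) (w : X), f (iterZ f i w) = iterZ f (i + 1) w := by
    intro i w
    simp only [iterZ]
    rw [add_comm, zpow_add, zpow_one, Equiv.Perm.mul_apply]
    rfl
  have key : ∀ i : ℤ, i ≠ -1 → dist (f (P i)) (P (i + 1)) = 0 := by
    intro i hi
    by_cases hneg : i < 0
    · have h1 : i + 1 < 0 := by omega
      simp [hP, hneg, h1, hstep]
    · have h1 : ¬ (i + 1 < 0) := by omega
      simp [hP, hneg, h1, hstep]
  have hps : Tendsto (fun i => dist (f (P i)) (P (i + 1))) cofinite (𝓝 0) := by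
    apply Tendsto.congr' _ tendsto_const_nhds
    rw [Filter.EventuallyEq, Filter.eventually_cofinite]
    apply Set.Finite.subset (Set.finite_singleton (-1 : ℤ))
    intro i hi
    simp only [Set.mem_setOf_eq] at hi
    by_contra hne
    exact hi ((key i (by simpa using hne)).symm)
  obtain ⟨z, hz⟩ := h P hps
  refine ⟨z, ?_, ?_⟩
  · have hmap : Tendsto (fun n : ℕ => (n : ℤ)) atTop cofinite := by
      rw [← Nat.cofinite_eq_atTop]
      exact Function.Injective.tendsto_cofinite (fun a b hab => by exact_mod_cast hab)
    have := hz.comp hmap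
    apply this.congr
    intro n
    have : ¬ ((n : ℤ) < 0) := by omega
    simp [hP, this]
  · have hmap : Tendsto (fun n : ℕ => -(n : ℤ)) atTop cofinite := by
      rw [← Nat.cofinite_eq_atTop]
      exact Function.Injective.tendsto_cofinite
        (fun a b hab => by omega)
    have := hz.comp hmap
    apply this.congr'
    filter_upwards [eventually_ge_atTop 1] with n hn
    have : (-(n : ℤ)) < 0 := by omega
    simp [hP, this, show 0 < n by omega]
end

section
/- Every expansive homeomorphism of a compact metric space with the shadowing property has the limit shadowing property: every sequence (x_n)_{n∈ℕ} with d(f(x_n), x_{n+1}) → 0 as n → ∞ is limit shadowed by some point y, i.e., d(f^n(y), x_n) → 0 as n → ∞. -/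
open Filter Topology Uniformity

section Helpers

variable {X : Type*} [MetricSpace X] (f : X ≃ₜ X)

lemma iterZ_add (m n : ℤ) (x : X) :
    iterZ f (m + n) x = iterZ f m (iterZ f n x) := by
  simp [iterZ, zpow_add, Equiv.Perm.mul_apply]

lemma iterZ_zero (x : X) : iterZ f 0 x = x := by simp [iterZ]

lemma iterZ_one (x : X) : iterZ f 1 x = f x := by simp [iterZ]

lemma f_iterZ (n : ℤ) (x : X) : f (iterZ f n x) = iterZ f (n + 1) x := by
  rw [add_comm, iterZ_add, iterZ_one]

lemma symm_iterZ (n : ℤ) (x : X) : f.symm (iterZ f n x) = iterZ f (n - 1) x := by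
  conv_lhs => rw [show n = (n - 1) + 1 by ring, ← f_iterZ]
  exact f.symm_apply_apply _

lemma iterZ_continuous (n : ℤ) : Continuous (iterZ f n) := by
  induction n using Int.induction_on with
  | zero =>
    have : iterZ f 0 = (id : X → X) := funext fun x => iterZ_zero f x
    rw [this]; exact continuous_id
  | succ i ih =>
    have : iterZ f (i + 1) = f ∘ iterZ f i := funext fun x => (f_iterZ f i x).symm
    rw [this]; exact f.continuous.comp ih
  | pred i ih =>
    have : iterZ f (-i - 1) = f.symm ∘ iterZ f (-i) :=
      funext fun x => (symm_iterZ f (-i) x).symm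
    rw [this]; exact f.symm.continuous.comp ih

lemma dist_comp_tendsto_zero {Y : Type*} [MetricSpace Y] {g : X → Y}
    (hg : UniformContinuous g) {ι : Type*} {l : Filter ι} {u v : ι → X}
    (h : Tendsto (fun k => dist (u k) (v k)) l (𝓝 0)) :
    Tendsto (fun k => dist (g (u k)) (g (v k))) l (𝓝 0) := by
  have h' : Tendsto (fun k => (u k, v k)) l (𝓤 X) :=
    (tendsto_uniformity_iff_dist_tendsto_zero (f := fun k => (u k, v k))).mpr h
  exact (tendsto_uniformity_iff_dist_tendsto_zero
    (f := fun k => (g (u k), g (v k)))).mp (Filter.Tendsto.comp hg h')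

lemma lemB [CompactSpace X] (z : ℤ → X)
    (hz : Tendsto (fun i => dist (f (z i)) (z (i + 1))) atTop (𝓝 0))
    (m : ℕ → ℤ) (hm : Tendsto m atTop atTop) (q : X)
    (hq : Tendsto (fun k => z (m k)) atTop (𝓝 q)) (j : ℤ) :
    Tendsto (fun k => z (m k + j)) atTop (𝓝 (iterZ f j q)) := by
  induction j using Int.induction_on with
  | zero => simpa [iterZ_zero] using hq
  | succ i ih =>
    have h1 : Tendsto (fun k => f (z (m k + (i : ℤ)))) atTop (𝓝 (f (iterZ f (i : ℤ) q))) :=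
      (f.continuous.tendsto _).comp ih
    have h2 : Tendsto (fun k => dist (f (z (m k + (i : ℤ)))) (z (m k + (i : ℤ) + 1)))
        atTop (𝓝 0) := by
      have h := hz.comp (tendsto_atTop_add_const_right atTop (i : ℤ) hm)
      exact h.congr fun k => rfl
    have h3 := h1.congr_dist h2
    rw [← f_iterZ]
    exact h3.congr fun k => by rw [add_assoc]
  | pred i ih =>
    have hsym : UniformContinuous (f.symm : X → X) :=
      CompactSpace.uniformContinuous_of_continuous f.symm.continuous
    have h0 : Tendsto (fun k => dist (f (z (m k + (-(i : ℤ) - 1)))) (z (m k + -(i : ℤ))))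
        atTop (𝓝 0) := by
      have h := hz.comp (tendsto_atTop_add_const_right atTop (-(i : ℤ) - 1) hm)
      refine h.congr fun k => ?_
      show dist (f (z (m k + (-(i : ℤ) - 1)))) (z (m k + (-(i : ℤ) - 1) + 1)) = _
      congr 2
      ring
    have h1 := dist_comp_tendsto_zero hsym h0
    simp only [f.symm_apply_apply] at h1
    have h2 : Tendsto (fun k => f.symm (z (m k + -(i : ℤ)))) atTop
        (𝓝 (f.symm (iterZ f (-(i : ℤ)) q))) := (f.symm.continuous.tendsto _).comp ih
    have h3 := h2.congr_dist (h1.congr fun k => (dist_comm _ _))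
    rw [show (-(i : ℤ) - 1) = (-(i : ℤ)) - 1 by ring, ← symm_iterZ]
    exact h3

lemma key [CompactSpace X] (c ε : ℝ) (hεc : ε < c)
    (hexp : ∀ a b : X, (∀ i : ℤ, dist (iterZ f i a) (iterZ f i b) < c) → a = b)
    (z : ℤ → X)
    (hz : Tendsto (fun i => dist (f (z i)) (z (i + 1))) atTop (𝓝 0))
    (y : X) (hy : ∀ i, dist (iterZ f i y) (z i) < ε) :
    Tendsto (fun i : ℤ => dist (iterZ f i y) (z i)) atTop (𝓝 0) := by
  by_contra hcon
  rw [Metric.tendsto_atTop] at hcon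
  push_neg at hcon
  obtain ⟨η, hη, hfreq⟩ := hcon
  have hn : ∀ k : ℕ, ∃ i : ℤ, (k : ℤ) ≤ i ∧ η ≤ dist (iterZ f i y) (z i) := by
    intro k
    obtain ⟨i, hik, hi⟩ := hfreq (k : ℤ)
    refine ⟨i, hik, ?_⟩
    rwa [Real.dist_eq, sub_zero, abs_of_nonneg dist_nonneg] at hi
  choose n hn1 hn2 using hn
  have hnT : Tendsto n atTop atTop :=
    tendsto_atTop_mono hn1 tendsto_natCast_atTop_atTop
  obtain ⟨p, -, φ, hφ, hp⟩ := isCompact_univ.tendsto_subseq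
    (x := fun k => iterZ f (n k) y) (fun k => Set.mem_univ _)
  obtain ⟨q, -, ψ, hψ, hq⟩ := isCompact_univ.tendsto_subseq
    (x := fun k => z (n (φ k))) (fun k => Set.mem_univ _)
  set m : ℕ → ℤ := fun k => n (φ (ψ k)) with hmdef
  have hmT : Tendsto m atTop atTop :=
    hnT.comp (hφ.tendsto_atTop.comp hψ.tendsto_atTop)
  have hpT : Tendsto (fun k => iterZ f (m k) y) atTop (𝓝 p) :=
    hp.comp hψ.tendsto_atTop
  have hqT : Tendsto (fun k => z (m k)) atTop (𝓝 q) := hq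
  have hpq : p = q := by
    refine hexp p q fun j => ?_
    have hA : Tendsto (fun k => iterZ f (m k + j) y) atTop (𝓝 (iterZ f j p)) := by
      have h := ((iterZ_continuous f j).tendsto p).comp hpT
      refine h.congr fun k => ?_
      show iterZ f j (iterZ f (m k) y) = iterZ f (m k + j) y
      rw [add_comm, iterZ_add]
    have hB := lemB f z hz m hmT q hqT j
    have hd : Tendsto (fun k => dist (iterZ f (m k + j) y) (z (m k + j))) atTop
        (𝓝 (dist (iterZ f j p) (iterZ f j q))) := hA.dist hB
    have hle : dist (iterZ f j p) (iterZ f j q) ≤ ε :=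
      le_of_tendsto' hd fun k => (hy _).le
    linarith
  have hd2 : Tendsto (fun k => dist (iterZ f (m k) y) (z (m k))) atTop
      (𝓝 (dist p q)) := hpT.dist hqT
  have hge : η ≤ dist p q := ge_of_tendsto' hd2 fun k => hn2 _
  rw [hpq, dist_self] at hge
  linarith

end Helpers

/-- Every expansive homeomorphism of a compact metric space with the shadowing property has
the limit shadowing property. -/
theorem stmt2 {X : Type*} [MetricSpace X] [CompactSpace X] (f : X ≃ₜ X)
    (hexp : ExpansiveH f) (hsh : ShadowingProp f) : LimitShadowing f := by
  intro x hx
  obtain ⟨c, hc, hexpc⟩ := hexp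
  obtain ⟨δ, hδ, hsh'⟩ := hsh (c / 2) (by linarith)
  obtain ⟨N, hN⟩ := Metric.tendsto_atTop.mp hx δ hδ
  have hN' : ∀ n, N ≤ n → dist (f (x n)) (x (n + 1)) < δ := by
    intro n hn
    have := hN n hn
    rwa [Real.dist_eq, sub_zero, abs_of_nonneg dist_nonneg] at this
  set z : ℤ → X := fun i => if h : 0 ≤ i then x (N + i.toNat) else iterZ f i (x N)
    with hzdef
  have hzpos : ∀ i : ℤ, 0 ≤ i → z i = x (N + i.toNat) := fun i h => dif_pos h
  have hzneg : ∀ i : ℤ, i < 0 → z i = iterZ f i (x N) := fun i h => dif_neg (not_le.2 h)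
  have hzpo : ∀ i, dist (f (z i)) (z (i + 1)) < δ := by
    intro i
    rcases le_or_gt 0 i with h | h
    · rw [hzpos i h, hzpos (i + 1) (by omega)]
      have h1 : (i + 1).toNat = i.toNat + 1 := by omega
      rw [h1, ← add_assoc]
      exact hN' _ (Nat.le_add_right _ _)
    · rcases lt_or_ge (i + 1) 0 with h1 | h1
      · rw [hzneg i h, hzneg _ h1, f_iterZ, dist_self]
        exact hδ
      · rw [hzneg i h, hzpos _ h1, f_iterZ, show i + 1 = 0 by omega]
        simp only [iterZ_zero, Int.toNat_zero, Nat.add_zero, dist_self]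
        exact hδ
  obtain ⟨y, hy⟩ := hsh' z hzpo
  have h1 : Tendsto (fun i : ℤ => N + i.toNat) atTop atTop :=
    tendsto_atTop_atTop.mpr fun b => ⟨(b : ℤ), fun j hj => by omega⟩
  have hzt : Tendsto (fun i : ℤ => dist (f (z i)) (z (i + 1))) atTop (𝓝 0) := by
    refine (hx.comp h1).congr' ?_
    filter_upwards [eventually_ge_atTop (0 : ℤ)] with i hi
    have h2 : (i + 1).toNat = i.toNat + 1 := by omega
    simp only [Function.comp]
    rw [hzpos i hi, hzpos (i + 1) (by omega), h2, ← add_assoc]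
  have hkey := key f c (c / 2) (by linarith) hexpc z hzt y hy
  refine ⟨iterZ f (-(N : ℤ)) y, ?_⟩
  have hcomp : Tendsto (fun n : ℕ => (n : ℤ) - N) atTop atTop :=
    tendsto_atTop_atTop.mpr fun b => ⟨(b + N).toNat, fun j hj => by omega⟩
  refine (hkey.comp hcomp).congr' ?_
  filter_upwards [eventually_ge_atTop N] with n hn
  simp only [Function.comp]
  have h2 : iterZ f ((n : ℤ) - N) y = iterZ f (n : ℤ) (iterZ f (-(N : ℤ)) y) := by
    rw [← iterZ_add, sub_eq_add_neg]
  have h3 : z ((n : ℤ) - N) = x n := by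
    rw [hzpos _ (by omega)]
    congr 1
    omega
  rw [h2, h3]
end

section
/- If a homeomorphism f of a compact metric space X has the two-sided limit shadowing property and s ∈ X is an attracting fixed point whose unstable set W^u(s) equals {s}, and whose stable set W^s(s) is not all of X, then a contradiction arises; hence if W^u(s) = {s} then W^s(s) = X. -/
open Filter Topology

lemma iterZ_add_one {X : Type*} [MetricSpace X] (f : X ≃ₜ X) (n : ℤ) (x : X) :
    iterZ f (n + 1) x = f (iterZ f n x) := by
  simp only [iterZ]
  rw [add_comm, zpow_add, zpow_one]
  rfl

lemma iterZ_fixed {X : Type*} [MetricSpace X] (f : X ≃ₜ X) {s : X} (hs : f s = s) :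
    ∀ n : ℤ, iterZ f n s = s := by
  have hsymm : f.symm s = s := by
    conv_lhs => rw [← hs]
    exact f.symm_apply_apply s
  intro n
  induction n using Int.induction_on with
  | zero => rfl
  | succ n ih => rw [iterZ_add_one, ih, hs]
  | pred n ih =>
    have := iterZ_add_one f (-(n : ℤ) - 1) s
    rw [sub_add_cancel, ih] at this
    have := congrArg f.symm this
    rw [f.symm_apply_apply] at this
    rw [← this, hsymm]

/-- For a homeomorphism with the two-sided limit shadowing property on a compact metric
space: if `s` is a fixed point with `W^u(s) = {s}`, then `W^s(s) = X`. -/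
theorem stmt8 {X : Type*} [MetricSpace X] [CompactSpace X] (f : X ≃ₜ X)
    (h : TwoSidedLimitShadowing f) (s : X) (hs : f s = s)
    (hu : {z : X | Tendsto (fun n : ℕ => dist (iterZ f (-(n : ℤ)) z) s) atTop (𝓝 0)} = {s}) :
    {z : X | Tendsto (fun n : ℕ => dist (iterZ f n z) s) atTop (𝓝 0)} = Set.univ := by
  apply Set.eq_univ_iff_forall.2
  intro x
  set z : ℤ → X := fun i => if i < 0 then s else iterZ f i x with hz
  have hpseudo : Tendsto (fun i => dist (f (z i)) (z (i + 1))) cofinite (𝓝 0) := by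
    apply Tendsto.congr' _ (tendsto_const_nhds : Tendsto (fun _ : ℤ => (0:ℝ)) cofinite (𝓝 0))
    rw [EventuallyEq, eventually_cofinite]
    apply Set.Finite.subset (Set.finite_singleton (-1 : ℤ))
    intro i hi
    simp only [Set.mem_setOf_eq] at hi
    by_contra hne
    simp only [Set.mem_singleton_iff] at hne
    apply hi
    rcases lt_trichotomy i (-1) with h1 | h1 | h1
    · have : z i = s := if_pos (by omega)
      have h2 : z (i + 1) = s := if_pos (by omega)
      rw [this, h2, hs, dist_self]
    · exact absurd h1 hne
    · have h0 : (0 : ℤ) ≤ i := by omega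
      have : z i = iterZ f i x := if_neg (by omega)
      have h2 : z (i + 1) = iterZ f (i + 1) x := if_neg (by omega)
      rw [this, h2, iterZ_add_one, dist_self]
  obtain ⟨y, hy⟩ := h z hpseudo
  -- y belongs to the unstable set of s, hence y = s
  have hnegtendsto : Tendsto (fun n : ℕ => -(n : ℤ)) atTop cofinite := by
    rw [← Nat.cofinite_eq_atTop]
    exact Function.Injective.tendsto_cofinite (fun a b hab => by
      simpa using hab)
  have hneg : Tendsto (fun n : ℕ => dist (iterZ f (-(n : ℤ)) y) s) atTop (𝓝 0) := by
    have := hy.comp hnegtendsto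
    apply Tendsto.congr' _ this
    filter_upwards [eventually_ge_atTop 1] with n hn
    have : z (-(n : ℤ)) = s := if_pos (by omega)
    simp [Function.comp, this]
  have hys : y = s := by
    have : y ∈ ({s} : Set X) := by rw [← hu]; exact hneg
    simpa using this
  -- now the positive direction
  have hpostendsto : Tendsto (fun n : ℕ => (n : ℤ)) atTop cofinite := by
    rw [← Nat.cofinite_eq_atTop]
    exact Function.Injective.tendsto_cofinite (fun a b hab => by simpa using hab)
  have hpos := hy.comp hpostendsto
  apply Tendsto.congr' _ hpos
  filter_upwards with n
  have h1 : z (n : ℤ) = iterZ f n x := if_neg (by omega)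
  simp only [Function.comp, h1, hys, iterZ_fixed f hs]
  rw [dist_comm]
end

section
/- If f is a homeomorphism of a compact metric space with the two-sided limit shadowing property, then for any two fixed points p and q of f there exists z with f^n(z) → q as n → ∞ and f^{-n}(z) → p as n → ∞. -/
open Filter Topology

/-- For a homeomorphism with the two-sided limit shadowing property and fixed points `p, q`,
there is a heteroclinic point `z` with `fⁿ(z) → q` and `f⁻ⁿ(z) → p`. -/
theorem stmt12 {X : Type*} [MetricSpace X] [CompactSpace X] (f : X ≃ₜ X)
    (h : TwoSidedLimitShadowing f) (p q : X) (hp : f p = p) (hq : f q = q) :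
    ∃ z : X,
      Tendsto (fun n : ℕ => iterZ f n z) atTop (𝓝 q) ∧
      Tendsto (fun n : ℕ => iterZ f (-(n : ℤ)) z) atTop (𝓝 p) := by
  set x : ℤ → X := fun i => if i < 0 then p else q with hx
  have hps : ∀ i : ℤ, i ≠ -1 → dist (f (x i)) (x (i + 1)) = 0 := by
    intro i hi
    rcases lt_trichotomy i (-1) with h1 | h1 | h1
    · have : i < 0 := by omega
      have : x i = p := if_pos this
      have h2 : x (i + 1) = p := if_pos (by omega)
      simp [this, h2, hp]
    · exact absurd h1 hi
    · have h0 : ¬ i < 0 := by omega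
      have : x i = q := if_neg h0
      have h2 : x (i + 1) = q := if_neg (by omega)
      simp [this, h2, hq]
  have hpseudo : Tendsto (fun i => dist (f (x i)) (x (i + 1))) cofinite (𝓝 0) := by
    apply Tendsto.congr' _ tendsto_const_nhds
    have : {i : ℤ | ¬ (0 : ℝ) = dist (f (x i)) (x (i + 1))} ⊆ {-1} := by
      intro i hi
      by_contra hne
      exact hi ((hps i (by simpa using hne)).symm)
    exact (Set.Finite.subset (Set.finite_singleton _) this : _)
  obtain ⟨y, hy⟩ := h x hpseudo
  refine ⟨y, ?_, ?_⟩
  · rw [tendsto_iff_dist_tendsto_zero]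
    have h1 : Tendsto (fun i : ℤ => dist (iterZ f i y) (x i)) atTop (𝓝 0) :=
      hy.mono_left (by rw [Int.cofinite_eq]; exact le_sup_right)
    have h2 := h1.comp (tendsto_natCast_atTop_atTop (R := ℤ))
    refine h2.congr (fun n => ?_)
    have : x (n : ℤ) = q := if_neg (by omega)
    simp [Function.comp, this]
  · rw [tendsto_iff_dist_tendsto_zero]
    have h1 : Tendsto (fun i : ℤ => dist (iterZ f i y) (x i)) atBot (𝓝 0) :=
      hy.mono_left (by rw [Int.cofinite_eq]; exact le_sup_left)
    have hneg : Tendsto (fun n : ℕ => -(n : ℤ)) atTop atBot :=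
      tendsto_neg_atBot_iff.mpr (tendsto_natCast_atTop_atTop)
    have h2 := h1.comp hneg
    refine (h2.congr' ?_)
    filter_upwards [eventually_gt_atTop 0] with n hn
    have : x (-(n : ℤ)) = p := if_pos (by omega)
    simp [Function.comp, this]
end
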